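/- (Comparison ⇒ boundary Harnack.) Suppose the following comparison principle holds with constant K: whenever u, v : closure(𝒞_{KR,R}(y)) → ℝ satisfy (a) u harmonic in 𝒞_{KR,R}(y), u ≥ 0, and u ≥ 1 on ∂𝒞_{KR,R}(y) ∩ 𝒟_{KR,R}(y); (b) v harmonic in 𝒞_{KR,R}(y), v ≤ 1, and v ≤ 0 on ∂𝒞_{KR,R}(y) ∩ 𝒟_{KR,R}(y); then v ≤ u on B_R(y) ∩ 𝒞. Further assume the Carleson estimate (u ≤ c_0 u(y+Re_1) on 𝒞 ∩ B_{KR}(y)) and the Harnack-chain lower bound (v ≥ v(y+Re_1)/c_0 on 𝒟_{KR,R}(y)). Then for u, v nonnegative harmonic in 𝒞 ∩ B_{3KR}(y), vanishing on ∂𝒞 ∩ B_{2KR}(y), normalized by u(y+Re_1) = v(y+Re_1) = 1, one has u(x)/v(x) ≤ 2c_0² for all x ∈ B_R(y) ∩ 𝒞. -/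

import Mathlib

open Finset

/-- Points of `ℤ^d` written as `ℤ × ℤ^{d-1}` (so `d = m + 1`). -/
abbrev Pt (m : ℕ) := ℤ × (Fin m → ℤ)

/-- The Euclidean norm of a lattice point. -/
noncomputable def enorm' {m : ℕ} (x : Pt m) : ℝ :=
  Real.sqrt ((x.1 : ℝ) ^ 2 + ∑ i, ((x.2 i : ℝ)) ^ 2)

/-- The `Γ`-boundary `∂A = {x ∉ A : x = z + e, z ∈ A, e ∈ Γ}`. -/
def gbdry {m : ℕ} (Γ : Finset (Pt m)) (A : Set (Pt m)) : Set (Pt m) :=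
  {x | x ∉ A ∧ ∃ z ∈ A, ∃ e ∈ Γ, x = z + e}

/-- The closure `A ∪ ∂A`. -/
def gcl {m : ℕ} (Γ : Finset (Pt m)) (A : Set (Pt m)) : Set (Pt m) :=
  A ∪ gbdry Γ A

/-- `u` is harmonic at `x`: `u x = ∑_{e ∈ Γ} π x e * u (x + e)`. -/
def HarmAt {m : ℕ} (Γ : Finset (Pt m)) (π : Pt m → Pt m → ℝ)
    (u : Pt m → ℝ) (x : Pt m) : Prop :=
  u x = ∑ e ∈ Γ, π x e * u (x + e)

/-- The discrete Euclidean ball of center `y` and radius `R`. -/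
def ball {m : ℕ} (y : Pt m) (R : ℝ) : Set (Pt m) := {x | enorm' (x - y) ≤ R}

/-- The discrete cube of center `y` and side `2R`. -/
def cube {m : ℕ} (y : Pt m) (R : ℝ) : Set (Pt m) :=
  {x | |((x.1 - y.1 : ℤ) : ℝ)| ≤ R ∧ ∀ i, |((x.2 i - y.2 i : ℤ) : ℝ)| ≤ R}

/-- Coercion of an integer vector to Euclidean space. -/
def toE {m : ℕ} (x : Fin m → ℤ) : EuclideanSpace ℝ (Fin m) := WithLp.toLp 2 (fun i => (x i : ℝ))

/-- The Lipschitz domain `𝒞 = {(x₁, x') ∈ ℤ^d : x₁ > φ(x')}`. -/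
def dom {m : ℕ} (φ : EuclideanSpace ℝ (Fin m) → ℝ) : Set (Pt m) :=
  {x | φ (toE x.2) < (x.1 : ℝ)}

/-- `δ(x)`: Euclidean distance from `x` to the boundary of `C`. -/
noncomputable def distToBdry {m : ℕ} (Γ : Finset (Pt m))
    (C : Set (Pt m)) (x : Pt m) : ℝ :=
  sInf ((fun z => enorm' (x - z)) '' gbdry Γ C)

/-- `Γ` contains all standard unit vectors. -/
def UnitVecs {m : ℕ} (Γ : Finset (Pt m)) : Prop :=
  ((1 : ℤ), (0 : Fin m → ℤ)) ∈ Γ ∧ ∀ i, ((0 : ℤ), Pi.single i (1 : ℤ)) ∈ Γ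

/-- `π` is a transition kernel: `π(x,e) ∈ [0,1]` and `∑_{e ∈ Γ} π(x,e) = 1`. -/
def Kernel {m : ℕ} (Γ : Finset (Pt m)) (π : Pt m → Pt m → ℝ) : Prop :=
  (∀ x e, 0 ≤ π x e) ∧ (∀ x e, π x e ≤ 1) ∧ ∀ x, ∑ e ∈ Γ, π x e = 1

/-- The walk is centered: `∑_{e ∈ Γ} π(x,e) e = 0`. -/
def Centered {m : ℕ} (Γ : Finset (Pt m)) (π : Pt m → Pt m → ℝ) : Prop :=
  ∀ x, (∑ e ∈ Γ, π x e * (e.1 : ℝ)) = 0 ∧ ∀ i, (∑ e ∈ Γ, π x e * (e.2 i : ℝ)) = 0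

/-- Uniform ellipticity: `π(x,e) ≥ α` for all `x` and `e ∈ Γ`. -/
def Elliptic {m : ℕ} (Γ : Finset (Pt m)) (π : Pt m → Pt m → ℝ) (α : ℝ) : Prop :=
  ∀ x e, e ∈ Γ → α ≤ π x e

/-- `φ` is `A`-Lipschitz with `φ 0 = 0`. -/
def LipA {m : ℕ} (A : ℝ) (φ : EuclideanSpace ℝ (Fin m) → ℝ) : Prop :=
  (∀ a b, |φ a - φ b| ≤ A * ‖a - b‖) ∧ φ 0 = 0

/-- `𝒟_{R,r}(y) = B_R(y) ∩ {x ∈ 𝒞 : δ(x) > r}`. -/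
noncomputable def sliceD {m : ℕ} (Γ : Finset (Pt m)) (C : Set (Pt m))
    (y : Pt m) (R r : ℝ) : Set (Pt m) :=
  ball y R ∩ {x ∈ C | r < distToBdry Γ C x}

/-- `𝒞_{R,r}(y) = (B_R(y) ∩ 𝒞) \ 𝒟_{R,r}(y)`. -/
noncomputable def sliceC {m : ℕ} (Γ : Finset (Pt m)) (C : Set (Pt m))
    (y : Pt m) (R r : ℝ) : Set (Pt m) :=
  (ball y R ∩ C) \ sliceD Γ C y R r

/-!
Take `w = c₀ v`. The Harnack-chain bound gives `w ≥ 1` on the part of `∂𝒞_{KR,R}(y)` inside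
`𝒟_{KR,R}(y)`, so the comparison principle applied to the pair `(w, 1 - w)` yields `1 - w ≤ w`,
i.e. `v ≥ 1 / (2 c₀)` on `B_R(y) ∩ 𝒞`. The Carleson estimate gives `u ≤ c₀` there.
-/

variable {m : ℕ} {Γ : Finset (Pt m)} {π : Pt m → Pt m → ℝ}

theorem ball_mono (y : Pt m) {R R' : ℝ} (h : R ≤ R') : ball y R ⊆ ball y R' :=
  fun _ hx => le_trans hx h

theorem gcl_mono {A B : Set (Pt m)} (h : A ⊆ B) : gcl Γ A ⊆ gcl Γ B := by
  rintro x (hx | ⟨-, z, hz, e, he, rfl⟩)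
  · exact Or.inl (h hx)
  · by_cases hB : z + e ∈ B
    · exact Or.inl hB
    · exact Or.inr ⟨hB, z, h hz, e, he, rfl⟩

theorem sliceC_subset (C : Set (Pt m)) (y : Pt m) (R r : ℝ) :
    sliceC Γ C y R r ⊆ ball y R ∩ C :=
  Set.sdiff_subset

theorem HarmAt.const_mul {u : Pt m → ℝ} {x : Pt m} (h : HarmAt Γ π u x) (c : ℝ) :
    HarmAt Γ π (fun w => c * u w) x := by
  show c * u x = ∑ e ∈ Γ, π x e * (c * u (x + e))
  rw [h, Finset.mul_sum]
  exact Finset.sum_congr rfl fun e _ => mul_left_comm c _ _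

theorem HarmAt.const_sub {u : Pt m → ℝ} {x : Pt m} (hπ : ∑ e ∈ Γ, π x e = 1)
    (h : HarmAt Γ π u x) (c : ℝ) : HarmAt Γ π (fun w => c - u w) x := by
  show c - u x = ∑ e ∈ Γ, π x e * (c - u (x + e))
  rw [h]
  simp only [mul_sub, Finset.sum_sub_distrib, ← Finset.sum_mul, hπ, one_mul]

def ComparisonPrinciple (Γ : Finset (Pt m)) (π : Pt m → Pt m → ℝ) (S T B : Set (Pt m)) :
    Prop :=
  ∀ u v : Pt m → ℝ,
    (∀ x ∈ S, HarmAt Γ π u x) → (∀ x ∈ gcl Γ S, 0 ≤ u x) → (∀ x ∈ gbdry Γ S ∩ T, 1 ≤ u x) →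
    (∀ x ∈ S, HarmAt Γ π v x) → (∀ x ∈ gcl Γ S, v x ≤ 1) → (∀ x ∈ gbdry Γ S ∩ T, v x ≤ 0) →
    ∀ x ∈ B, v x ≤ u x

theorem ComparisonPrinciple.half_le {S T B : Set (Pt m)}
    (hcomp : ComparisonPrinciple Γ π S T B) (hπ : ∀ x, ∑ e ∈ Γ, π x e = 1) {w : Pt m → ℝ}
    (hw : ∀ x ∈ S, HarmAt Γ π w x) (hw0 : ∀ x ∈ gcl Γ S, 0 ≤ w x)
    (hw1 : ∀ x ∈ gbdry Γ S ∩ T, 1 ≤ w x) {x : Pt m} (hx : x ∈ B) : 1 / 2 ≤ w x := by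
  have h := hcomp w (fun z => 1 - w z) hw hw0 hw1 (fun z hz => (hw z hz).const_sub (hπ z) 1)
    (fun z hz => by linarith [hw0 z hz]) (fun z hz => by linarith [hw1 z hz]) x hx
  linarith

theorem comparison_implies_bhp_general {m : ℕ} (Γ : Finset (Pt m))
    (π : Pt m → Pt m → ℝ)
    (hK : Kernel Γ π)
    (φ : EuclideanSpace ℝ (Fin m) → ℝ)
    (K : ℝ) (hK1 : 1 ≤ K) (R : ℕ)
    (y : Pt m) (c0 : ℝ) (hc0 : 0 < c0)
    (u v : Pt m → ℝ)
    (hcomp : ∀ u' v' : Pt m → ℝ,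
      (∀ x ∈ sliceC Γ (dom φ) y (K * R) R, HarmAt Γ π u' x) →
      (∀ x ∈ gcl Γ (sliceC Γ (dom φ) y (K * R) R), 0 ≤ u' x) →
      (∀ x ∈ gbdry Γ (sliceC Γ (dom φ) y (K * R) R) ∩ sliceD Γ (dom φ) y (K * R) R,
        1 ≤ u' x) →
      (∀ x ∈ sliceC Γ (dom φ) y (K * R) R, HarmAt Γ π v' x) →
      (∀ x ∈ gcl Γ (sliceC Γ (dom φ) y (K * R) R), v' x ≤ 1) →
      (∀ x ∈ gbdry Γ (sliceC Γ (dom φ) y (K * R) R) ∩ sliceD Γ (dom φ) y (K * R) R,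
        v' x ≤ 0) →
      ∀ x ∈ ball y R ∩ dom φ, v' x ≤ u' x)
    (hv_harm : ∀ x ∈ dom φ ∩ ball y (3 * K * R), HarmAt Γ π v x)
    (hv0 : ∀ x ∈ gcl Γ (dom φ ∩ ball y (3 * K * R)), 0 ≤ v x)
    (hnorm_u : u (y + ((R : ℤ), 0)) = 1)
    (hnorm_v : v (y + ((R : ℤ), 0)) = 1)
    (hcarl : ∀ x ∈ dom φ ∩ ball y (K * R), u x ≤ c0 * u (y + ((R : ℤ), 0)))
    (hharnlow : ∀ x ∈ sliceD Γ (dom φ) y (K * R) R,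
      v (y + ((R : ℤ), 0)) / c0 ≤ v x) :
    ∀ x ∈ ball y R ∩ dom φ, u x / v x ≤ 2 * c0 ^ 2 := by
  intro x ⟨hxR, hxC⟩
  have hR : (0 : ℝ) ≤ R := R.cast_nonneg
  have hslice : sliceC Γ (dom φ) y (K * R) R ⊆ dom φ ∩ ball y (3 * K * R) := fun z hz =>
    have hz := sliceC_subset _ _ _ _ hz
    ⟨hz.2, ball_mono y (by nlinarith) hz.1⟩
  have hv_half : 1 / 2 ≤ c0 * v x :=
    ComparisonPrinciple.half_le hcomp hK.2.2
      (fun z hz => (hv_harm z (hslice hz)).const_mul c0)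
      (fun z hz => mul_nonneg hc0.le (hv0 z (gcl_mono hslice hz)))
      (fun z hz => by
        have := mul_le_mul_of_nonneg_left (hharnlow z hz.2) hc0.le
        rwa [hnorm_v, mul_one_div_cancel hc0.ne'] at this)
      ⟨hxR, hxC⟩
  have hu_le : u x ≤ c0 := by
    simpa [hnorm_u] using hcarl x ⟨hxC, ball_mono y (by nlinarith) hxR⟩
  have hv_pos : 0 < v x := pos_of_mul_pos_right (by linarith) hc0.le
  rw [div_le_iff₀ hv_pos]
  calc u x ≤ 2 * c0 * (1 / 2) := by linarith
    _ ≤ 2 * c0 * (c0 * v x) := by gcongr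
    _ = 2 * c0 ^ 2 * v x := by ring

/-- the comparison principle on `𝒞_{KR,R}(y)`, together with the
Carleson estimate and the Harnack-chain lower bound, implies the boundary
Harnack inequality `u/v ≤ 2c₀²` on `B_R(y) ∩ 𝒞` for normalized `u, v`. -/
theorem comparison_implies_bhp {m : ℕ} (Γ : Finset (Pt m))
    (π : Pt m → Pt m → ℝ) (α A : ℝ) (hα : 0 < α)
    (hK : Kernel Γ π) (hCent : Centered Γ π) (hE : Elliptic Γ π α)
    (hU : UnitVecs Γ)
    (φ : EuclideanSpace ℝ (Fin m) → ℝ) (hφ : LipA A φ)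
    (K : ℝ) (hK1 : 1 ≤ K) (R : ℕ) (hR : 0 < R)
    (y : Pt m) (hy : y ∈ gbdry Γ (dom φ)) (c0 : ℝ) (hc0 : 0 < c0)
    (u v : Pt m → ℝ)
    (hcomp : ∀ u' v' : Pt m → ℝ,
      (∀ x ∈ sliceC Γ (dom φ) y (K * R) R, HarmAt Γ π u' x) →
      (∀ x ∈ gcl Γ (sliceC Γ (dom φ) y (K * R) R), 0 ≤ u' x) →
      (∀ x ∈ gbdry Γ (sliceC Γ (dom φ) y (K * R) R) ∩ sliceD Γ (dom φ) y (K * R) R,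
        1 ≤ u' x) →
      (∀ x ∈ sliceC Γ (dom φ) y (K * R) R, HarmAt Γ π v' x) →
      (∀ x ∈ gcl Γ (sliceC Γ (dom φ) y (K * R) R), v' x ≤ 1) →
      (∀ x ∈ gbdry Γ (sliceC Γ (dom φ) y (K * R) R) ∩ sliceD Γ (dom φ) y (K * R) R,
        v' x ≤ 0) →
      ∀ x ∈ ball y R ∩ dom φ, v' x ≤ u' x)
    (hu_harm : ∀ x ∈ dom φ ∩ ball y (3 * K * R), HarmAt Γ π u x)
    (hu0 : ∀ x ∈ gcl Γ (dom φ ∩ ball y (3 * K * R)), 0 ≤ u x)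
    (hv_harm : ∀ x ∈ dom φ ∩ ball y (3 * K * R), HarmAt Γ π v x)
    (hv0 : ∀ x ∈ gcl Γ (dom φ ∩ ball y (3 * K * R)), 0 ≤ v x)
    (huzero : ∀ x ∈ gbdry Γ (dom φ) ∩ ball y (2 * K * R), u x = 0)
    (hvzero : ∀ x ∈ gbdry Γ (dom φ) ∩ ball y (2 * K * R), v x = 0)
    (hnorm_u : u (y + ((R : ℤ), 0)) = 1)
    (hnorm_v : v (y + ((R : ℤ), 0)) = 1)
    (hcarl : ∀ x ∈ dom φ ∩ ball y (K * R), u x ≤ c0 * u (y + ((R : ℤ), 0)))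
    (hharnlow : ∀ x ∈ sliceD Γ (dom φ) y (K * R) R,
      v (y + ((R : ℤ), 0)) / c0 ≤ v x) :
    ∀ x ∈ ball y R ∩ dom φ, u x / v x ≤ 2 * c0 ^ 2 :=
  comparison_implies_bhp_general Γ π hK φ K hK1 R y c0 hc0 u v hcomp hv_harm hv0 hnorm_u hnorm_v
    hcarl hharnlow
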